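/- Let C* = Λ − Ū(a*) ≥ 0. The coverage-based bound exp(−(1/e)Λ − (1 − 1/e)Ū(a*)) strictly exceeds the approximate-objective bound (1 − 1/e)·exp(−Ū(a*)) if and only if C* < −e·ln(1 − 1/e). -/

import Mathlib

/- Factoring out `exp (-Ū)`, the coverage bound is `exp (-C*/e) · exp (-Ū)`, so the comparison
reduces to `1 - 1/e < exp (-C*/e)`, which is the claimed threshold after taking logarithms. -/

open Real

lemma exp_neg_div_mul_sub_one_sub_div (k Λ U : ℝ) :
    exp (-(1 / k) * Λ - (1 - 1 / k) * U) = exp (-(Λ - U) / k) * exp (-U) := by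
  rw [← exp_add]
  ring_nf

lemma lt_exp_neg_div_iff {a k x : ℝ} (ha : 0 < a) (hk : 0 < k) :
    a < exp (-x / k) ↔ x < -k * log a := by
  rw [← log_lt_iff_lt_exp ha, lt_div_iff₀ hk]
  constructor <;> intro h <;> linarith

lemma one_sub_one_div_exp_one_pos : 0 < 1 - 1 / exp 1 := by
  rw [sub_pos, div_lt_one (exp_pos 1)]
  exact one_lt_exp_iff.mpr one_pos

theorem stmt_6_general (Λ Us : ℝ) :
    Real.exp (-(1 / Real.exp 1) * Λ - (1 - 1 / Real.exp 1) * Us)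
        > (1 - 1 / Real.exp 1) * Real.exp (-Us)
      ↔ Λ - Us < -Real.exp 1 * Real.log (1 - 1 / Real.exp 1) := by
  rw [exp_neg_div_mul_sub_one_sub_div, gt_iff_lt, mul_lt_mul_iff_left₀ (exp_pos _)]
  exact lt_exp_neg_div_iff one_sub_one_div_exp_one_pos (exp_pos 1)

theorem stmt_6 (Λ Us : ℝ) (hΛ : 0 ≤ Λ) (hUs : Us ∈ Set.Icc 0 Λ) :
    Real.exp (-(1 / Real.exp 1) * Λ - (1 - 1 / Real.exp 1) * Us)
        > (1 - 1 / Real.exp 1) * Real.exp (-Us)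
      ↔ Λ - Us < -Real.exp 1 * Real.log (1 - 1 / Real.exp 1) :=
  stmt_6_general Λ Us
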